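/- Let (L, Q) be a unimodular lattice of signature (1,N), N ≥ 2, and w ∈ L primitive isotropic. Then Λ_w is a maximal torsion-free subgroup of Stab(w): for any g ∈ Stab(w) with g ∉ Λ_w, the subgroup ⟨Λ_w, g⟩ contains a nontrivial torsion element. -/
import Mathlib


/-- The standard bilinear form of signature `(1, N)` on `ℤ^{N+1}`. -/
def QZ (N : ℕ) (x y : Fin (N + 1) → ℤ) : ℤ :=
  x 0 * y 0 - ∑ i : Fin N, x i.succ * y i.succ

namespace Stmt11

variable {N : ℕ}

lemma QZ_comm (x y : Fin (N+1) → ℤ) : QZ N x y = QZ N y x := by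
  simp [QZ, mul_comm]

lemma QZ_add_right (x y z : Fin (N+1) → ℤ) : QZ N x (y + z) = QZ N x y + QZ N x z := by
  simp [QZ, mul_add, Finset.sum_add_distrib]; ring

lemma QZ_smul_right (c : ℤ) (x y : Fin (N+1) → ℤ) : QZ N x (c • y) = c * QZ N x y := by
  simp only [QZ, Pi.smul_apply, smul_eq_mul, mul_sub, Finset.mul_sum]
  congr 1
  · ring
  · exact Finset.sum_congr rfl fun i _ => by ring

lemma QZ_sub_right (x y z : Fin (N+1) → ℤ) : QZ N x (y - z) = QZ N x y - QZ N x z := by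
  simp [QZ, mul_sub, Finset.sum_sub_distrib]; ring

lemma QZ_add_left (x y z : Fin (N+1) → ℤ) : QZ N (x + y) z = QZ N x z + QZ N y z := by
  rw [QZ_comm, QZ_add_right, QZ_comm z x, QZ_comm z y]

lemma QZ_smul_left (c : ℤ) (x y : Fin (N+1) → ℤ) : QZ N (c • x) y = c * QZ N x y := by
  rw [QZ_comm, QZ_smul_right, QZ_comm]

lemma QZ_sub_left (x y z : Fin (N+1) → ℤ) : QZ N (x - y) z = QZ N x z - QZ N y z := by
  rw [QZ_comm, QZ_sub_right, QZ_comm z x, QZ_comm z y]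

lemma QZ_zero_right (x : Fin (N+1) → ℤ) : QZ N x 0 = 0 := by simp [QZ]

lemma QZ_zero_left (x : Fin (N+1) → ℤ) : QZ N 0 x = 0 := by simp [QZ]

/-- `QZ N w` as a linear functional. -/
def QZf (N : ℕ) (w : Fin (N+1) → ℤ) : (Fin (N+1) → ℤ) →ₗ[ℤ] ℤ where
  toFun := QZ N w
  map_add' y z := QZ_add_right w y z
  map_smul' c y := QZ_smul_right c w y

@[simp] lemma QZf_apply (w x : Fin (N+1) → ℤ) : QZf N w x = QZ N w x := rfl

end Stmt11

namespace Stmt11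

variable {N : ℕ}

/-- coefficient of `w` in the decomposition. -/
def aC (N : ℕ) (w w' x : Fin (N+1) → ℤ) : ℤ := QZ N w' x - QZ N w' w' * QZ N w x

/-- the projection onto `K = {w,w'}^⊥`. -/
def piL (N : ℕ) (w w' : Fin (N+1) → ℤ) : (Fin (N+1) → ℤ) →ₗ[ℤ] (Fin (N+1) → ℤ) :=
  LinearMap.id - ((QZf N w' - QZ N w' w' • QZf N w).smulRight w) - (QZf N w).smulRight w'

lemma piL_apply (w w' x : Fin (N+1) → ℤ) :
    piL N w w' x = x - aC N w w' x • w - QZ N w x • w' := by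
  simp [piL, aC, sub_smul]

def tauL (N : ℕ) (w w' : Fin (N+1) → ℤ)
    (gl : (Fin (N+1) → ℤ) →ₗ[ℤ] (Fin (N+1) → ℤ)) : (Fin (N+1) → ℤ) →ₗ[ℤ] (Fin (N+1) → ℤ) :=
  gl - ((QZf N w').comp gl).smulRight w

lemma tauL_apply (w w' : Fin (N+1) → ℤ) (gl) (k : Fin (N+1) → ℤ) :
    tauL N w w' gl k = gl k - QZ N w' (gl k) • w := by
  simp [tauL]

def sigL (N : ℕ) (w w' : Fin (N+1) → ℤ)
    (gl : (Fin (N+1) → ℤ) →ₗ[ℤ] (Fin (N+1) → ℤ)) : (Fin (N+1) → ℤ) →ₗ[ℤ] (Fin (N+1) → ℤ) :=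
  ((QZf N w' - QZ N w' w' • QZf N w).smulRight w) + ((QZf N w).smulRight w')
    + (tauL N w w' gl).comp (piL N w w')

lemma sigL_apply (w w' : Fin (N+1) → ℤ) (gl) (x : Fin (N+1) → ℤ) :
    sigL N w w' gl x = aC N w w' x • w + QZ N w x • w' + tauL N w w' gl (piL N w w' x) := by
  simp [sigL, aC, sub_smul]

section Identities

variable {w w' : Fin (N+1) → ℤ}

lemma QZ_w_piL (hwiso : QZ N w w = 0) (hww' : QZ N w w' = 1) (x : Fin (N+1) → ℤ) :
    QZ N w (piL N w w' x) = 0 := by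
  rw [piL_apply]
  simp only [QZ_sub_right, QZ_smul_right, hwiso, hww', mul_zero, mul_one, sub_zero]
  ring

lemma QZ_w'_piL (hww' : QZ N w w' = 1) (x : Fin (N+1) → ℤ) :
    QZ N w' (piL N w w' x) = 0 := by
  rw [piL_apply]
  simp only [QZ_sub_right, QZ_smul_right, aC, QZ_comm w' w, hww', mul_one]
  ring

lemma decomp (x : Fin (N+1) → ℤ) :
    x = aC N w w' x • w + QZ N w x • w' + piL N w w' x := by
  rw [piL_apply]; abel

/-- `piL` relates the form on `x,y` with the form on projections. -/
lemma QZ_piL_piL (hwiso : QZ N w w = 0) (hww' : QZ N w w' = 1) (x y : Fin (N+1) → ℤ) :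
    QZ N (piL N w w' x) (piL N w w' y)
      = QZ N x y - aC N w w' x * QZ N w y - aC N w w' y * QZ N w x
        - QZ N w' w' * (QZ N w x * QZ N w y) := by
  rw [piL_apply, piL_apply]
  simp only [QZ_sub_right, QZ_sub_left, QZ_smul_right, QZ_smul_left, hwiso,
    QZ_comm w' w, hww', mul_zero, mul_one, sub_zero, zero_mul]
  simp only [aC, QZ_comm y w, QZ_comm y w', QZ_comm x w, QZ_comm x w', QZ_comm w' w, hww']
  ring

end Identities

end Stmt11

namespace Stmt11

section TauSig

variable {N : ℕ} {w w' : Fin (N+1) → ℤ} {gl : (Fin (N+1) → ℤ) →ₗ[ℤ] (Fin (N+1) → ℤ)}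

lemma QZ_w_gl (hglQ : ∀ x y, QZ N (gl x) (gl y) = QZ N x y) (hglw : gl w = w)
    {k : Fin (N+1) → ℤ} (hk : QZ N w k = 0) : QZ N w (gl k) = 0 := by
  calc QZ N w (gl k) = QZ N (gl w) (gl k) := by rw [hglw]
  _ = QZ N w k := hglQ w k
  _ = 0 := hk

lemma QZ_w_tau (hwiso : QZ N w w = 0)
    (hglQ : ∀ x y, QZ N (gl x) (gl y) = QZ N x y) (hglw : gl w = w)
    {k : Fin (N+1) → ℤ} (hk : QZ N w k = 0) : QZ N w (tauL N w w' gl k) = 0 := by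
  rw [tauL_apply, QZ_sub_right, QZ_smul_right, hwiso, QZ_w_gl hglQ hglw hk]
  ring

lemma QZ_w'_tau (hww' : QZ N w w' = 1) (k : Fin (N+1) → ℤ) :
    QZ N w' (tauL N w w' gl k) = 0 := by
  rw [tauL_apply, QZ_sub_right, QZ_smul_right, QZ_comm w' w, hww']
  ring

lemma QZ_tau_tau (hwiso : QZ N w w = 0)
    (hglQ : ∀ x y, QZ N (gl x) (gl y) = QZ N x y) (hglw : gl w = w)
    {k₁ k₂ : Fin (N+1) → ℤ} (h₁ : QZ N w k₁ = 0) (h₂ : QZ N w k₂ = 0) :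
    QZ N (tauL N w w' gl k₁) (tauL N w w' gl k₂) = QZ N k₁ k₂ := by
  rw [tauL_apply, tauL_apply, QZ_sub_right, QZ_sub_left, QZ_sub_left, QZ_smul_right,
    QZ_smul_left, QZ_smul_left, QZ_smul_right, hglQ, hwiso,
    QZ_w_gl hglQ hglw h₂, QZ_comm (gl k₁) w, QZ_w_gl hglQ hglw h₁]
  ring

lemma QZ_w_sig (hwiso : QZ N w w = 0) (hww' : QZ N w w' = 1)
    (hglQ : ∀ x y, QZ N (gl x) (gl y) = QZ N x y) (hglw : gl w = w)
    (x : Fin (N+1) → ℤ) : QZ N w (sigL N w w' gl x) = QZ N w x := by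
  rw [sigL_apply, QZ_add_right, QZ_add_right, QZ_smul_right, QZ_smul_right, hwiso, hww',
    QZ_w_tau hwiso hglQ hglw (QZ_w_piL hwiso hww' x)]
  ring

lemma QZ_w'_sig (hwiso : QZ N w w = 0) (hww' : QZ N w w' = 1)
    (x : Fin (N+1) → ℤ) : QZ N w' (sigL N w w' gl x) = QZ N w' x := by
  rw [sigL_apply, QZ_add_right, QZ_add_right, QZ_smul_right, QZ_smul_right,
    QZ_comm w' w, hww', QZ_w'_tau hww', aC]
  ring

lemma piL_sig (hwiso : QZ N w w = 0) (hww' : QZ N w w' = 1)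
    (hglQ : ∀ x y, QZ N (gl x) (gl y) = QZ N x y) (hglw : gl w = w)
    (x : Fin (N+1) → ℤ) :
    piL N w w' (sigL N w w' gl x) = tauL N w w' gl (piL N w w' x) := by
  have ha : aC N w w' (sigL N w w' gl x) = aC N w w' x := by
    rw [aC, aC, QZ_w_sig hwiso hww' hglQ hglw, QZ_w'_sig hwiso hww']
  rw [piL_apply, ha, QZ_w_sig hwiso hww' hglQ hglw, sigL_apply]
  abel

lemma sig_isometry (hwiso : QZ N w w = 0) (hww' : QZ N w w' = 1)
    (hglQ : ∀ x y, QZ N (gl x) (gl y) = QZ N x y) (hglw : gl w = w)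
    (x y : Fin (N+1) → ℤ) :
    QZ N (sigL N w w' gl x) (sigL N w w' gl y) = QZ N x y := by
  rw [sigL_apply, sigL_apply]
  set t₁ := tauL N w w' gl (piL N w w' x) with ht₁
  set t₂ := tauL N w w' gl (piL N w w' y) with ht₂
  have h1 : QZ N w t₁ = 0 := QZ_w_tau hwiso hglQ hglw (QZ_w_piL hwiso hww' x)
  have h2 : QZ N w t₂ = 0 := QZ_w_tau hwiso hglQ hglw (QZ_w_piL hwiso hww' y)
  have h3 : QZ N w' t₁ = 0 := QZ_w'_tau hww' _
  have h4 : QZ N w' t₂ = 0 := QZ_w'_tau hww' _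
  have h5 : QZ N t₁ t₂ = QZ N (piL N w w' x) (piL N w w' y) :=
    QZ_tau_tau hwiso hglQ hglw (QZ_w_piL hwiso hww' x) (QZ_w_piL hwiso hww' y)
  simp only [QZ_add_left, QZ_add_right, QZ_smul_left, QZ_smul_right, hwiso, hww',
    QZ_comm w' w, h1, h2, h3, h4, h5, QZ_comm t₁ w, QZ_comm t₁ w',
    QZ_piL_piL hwiso hww']
  ring

lemma sig_w (hwiso : QZ N w w = 0) (hww' : QZ N w w' = 1) (hglw : gl w = w) :
    sigL N w w' gl w = w := by
  have hπ : piL N w w' w = 0 := by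
    rw [piL_apply, aC, QZ_comm w' w, hww', hwiso]
    simp
  rw [sigL_apply, hπ, map_zero, aC, QZ_comm w' w, hww', hwiso]
  simp

lemma sig_w' (hww' : QZ N w w' = 1) :
    sigL N w w' gl w' = w' := by
  have hπ : piL N w w' w' = 0 := by
    rw [piL_apply, aC, hww']
    simp
  rw [sigL_apply, hπ, map_zero, aC, hww']
  simp

lemma tau_tau_inv {gl₂ : (Fin (N+1) → ℤ) →ₗ[ℤ] (Fin (N+1) → ℤ)}
    (hww' : QZ N w w' = 1) (hg2w : gl₂ w = w) (hinv : ∀ k, gl₂ (gl k) = k)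
    {k : Fin (N+1) → ℤ} (hk' : QZ N w' k = 0) :
    tauL N w w' gl₂ (tauL N w w' gl k) = k := by
  rw [tauL_apply, tauL_apply]
  rw [map_sub, map_smul, hinv, hg2w]
  rw [QZ_sub_right, QZ_smul_right, QZ_comm w' w, hww', hk']
  module

lemma sig_comp {gl₂ : (Fin (N+1) → ℤ) →ₗ[ℤ] (Fin (N+1) → ℤ)}
    (hwiso : QZ N w w = 0) (hww' : QZ N w w' = 1)
    (hglQ : ∀ x y, QZ N (gl x) (gl y) = QZ N x y) (hglw : gl w = w)
    (hg2w : gl₂ w = w) (hinv : ∀ k, gl₂ (gl k) = k)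
    (x : Fin (N+1) → ℤ) :
    sigL N w w' gl₂ (sigL N w w' gl x) = x := by
  rw [sigL_apply w w' gl₂ (sigL N w w' gl x)]
  have ha : aC N w w' (sigL N w w' gl x) = aC N w w' x := by
    rw [aC, aC, QZ_w_sig hwiso hww' hglQ hglw, QZ_w'_sig hwiso hww']
  rw [ha, QZ_w_sig hwiso hww' hglQ hglw, piL_sig hwiso hww' hglQ hglw,
    tau_tau_inv hww' hg2w hinv (QZ_w'_piL hww' x)]
  exact (decomp x).symm

end TauSig

end Stmt11

namespace Stmt11

variable {N : ℕ}

lemma sq_sum (w k : Fin (N+1) → ℤ) (hw : QZ N w w = 0) (hk : QZ N w k = 0) :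
    ∑ j : Fin (N+1), (w 0 * k j - k 0 * w j)^2 = -((w 0)^2 * QZ N k k) := by
  have hw' : w 0 * w 0 = ∑ i : Fin N, w i.succ * w i.succ := by
    have := sub_eq_zero.mpr hw.symm  -- ?
    simpa [QZ, sub_eq_zero] using hw
  have hk' : w 0 * k 0 = ∑ i : Fin N, w i.succ * k i.succ := by
    simpa [QZ, sub_eq_zero] using hk
  rw [Fin.sum_univ_succ]
  have expand : ∀ i : Fin N, (w 0 * k i.succ - k 0 * w i.succ)^2
      = (w 0)^2 * (k i.succ * k i.succ) - (2 * (w 0) * (k 0)) * (w i.succ * k i.succ)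
        + (k 0)^2 * (w i.succ * w i.succ) := by intro i; ring
  rw [Finset.sum_congr rfl (fun i _ => expand i)]
  rw [Finset.sum_add_distrib, Finset.sum_sub_distrib, ← Finset.mul_sum, ← Finset.mul_sum,
    ← Finset.mul_sum, ← hw', ← hk']
  have : QZ N k k = k 0 * k 0 - ∑ i : Fin N, k i.succ * k i.succ := rfl
  rw [this]
  ring

end Stmt11

namespace Stmt11

variable {N : ℕ}

lemma abs_le_of_sq_le {v D : ℤ} (h : v^2 ≤ D) : -D ≤ v ∧ v ≤ D := by
  have hD : 0 ≤ D := le_trans (sq_nonneg v) h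
  have h' : v * v ≤ D := by nlinarith [h]
  constructor
  · by_contra hc
    push_neg at hc
    have h1 : (D+1) * 1 ≤ (-v) * (-v) :=
      mul_le_mul (by omega) (by omega) (by omega) (by omega)
    rw [neg_mul_neg, mul_one] at h1
    omega
  · by_contra hc
    push_neg at hc
    have h1 : (D+1) * 1 ≤ v * v :=
      mul_le_mul (by omega) (by omega) (by omega) (by omega)
    rw [mul_one] at h1
    omega

lemma S_finite (w w' : Fin (N+1) → ℤ) (hwiso : QZ N w w = 0) (hww' : QZ N w w' = 1)
    (hw0 : w 0 ≠ 0) :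
    {f : (Fin (N+1) → ℤ) ≃ₗ[ℤ] (Fin (N+1) → ℤ) |
      (∀ x y, QZ N (f x) (f y) = QZ N x y) ∧ f w = w ∧ f w' = w'}.Finite := by
  set S := {f : (Fin (N+1) → ℤ) ≃ₗ[ℤ] (Fin (N+1) → ℤ) |
      (∀ x y, QZ N (f x) (f y) = QZ N x y) ∧ f w = w ∧ f w' = w'} with hS
  set e : Fin (N+1) → (Fin (N+1) → ℤ) := fun i => Pi.single i 1 with he
  set Φ : ((Fin (N+1) → ℤ) ≃ₗ[ℤ] (Fin (N+1) → ℤ)) → (Fin (N+1) → Fin (N+1) → ℤ) :=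
    fun f i => (w 0) • (piL N w w' (f (e i))) - ((piL N w w' (f (e i))) 0) • w with hΦ
  -- coefficients are preserved for f ∈ S
  have hcoeff : ∀ f ∈ S, ∀ x, QZ N w (f x) = QZ N w x ∧ QZ N w' (f x) = QZ N w' x := by
    rintro f ⟨hfQ, hfw, hfw'⟩ x
    constructor
    · conv_lhs => rw [← hfw]
      exact hfQ w x
    · conv_lhs => rw [← hfw']
      exact hfQ w' x
  -- the norm identity
  have hnorm : ∀ f ∈ S, ∀ i, QZ N (piL N w w' (f (e i))) (piL N w w' (f (e i)))
      = QZ N (piL N w w' (e i)) (piL N w w' (e i)) := by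
    rintro f hf i
    obtain ⟨hfQ, hfw, hfw'⟩ := hf
    rw [QZ_piL_piL hwiso hww', QZ_piL_piL hwiso hww', hfQ, aC, aC,
      (hcoeff f ⟨hfQ, hfw, hfw'⟩ (e i)).1, (hcoeff f ⟨hfQ, hfw, hfw'⟩ (e i)).2]
  -- sum of squares of Φ f i
  have hsq : ∀ f ∈ S, ∀ i, ∑ j : Fin (N+1), (Φ f i j)^2
      = -((w 0)^2 * QZ N (piL N w w' (e i)) (piL N w w' (e i))) := by
    intro f hf i
    have : ∀ j, Φ f i j = w 0 * (piL N w w' (f (e i))) j - (piL N w w' (f (e i))) 0 * w j := by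
      intro j; simp [hΦ]
    rw [Finset.sum_congr rfl (fun j _ => by rw [this j])]
    rw [sq_sum w _ hwiso (QZ_w_piL hwiso hww' _), hnorm f hf i]
  -- the bound
  set D : ℤ := ∑ i : Fin (N+1),
      |(w 0)^2 * QZ N (piL N w w' (e i)) (piL N w w' (e i))| with hD
  have himg : Φ '' S ⊆ Set.Icc (fun _ _ => -D) (fun _ _ => D) := by
    rintro _ ⟨f, hf, rfl⟩
    have hb : ∀ i j, (Φ f i j)^2 ≤ D := by
      intro i j
      have h1 : (Φ f i j)^2 ≤ ∑ j' : Fin (N+1), (Φ f i j')^2 :=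
        Finset.single_le_sum (f := fun j' => (Φ f i j')^2) (fun j' _ => sq_nonneg _)
          (Finset.mem_univ j)
      rw [hsq f hf i] at h1
      have h2 : -((w 0)^2 * QZ N (piL N w w' (e i)) (piL N w w' (e i)))
          ≤ |(w 0)^2 * QZ N (piL N w w' (e i)) (piL N w w' (e i))| := neg_le_abs _
      have h3 : |(w 0)^2 * QZ N (piL N w w' (e i)) (piL N w w' (e i))| ≤ D := by
        rw [hD]
        exact Finset.single_le_sum (f := fun i' => |(w 0)^2 * QZ N (piL N w w' (e i')) (piL N w w' (e i'))|)
          (fun i' _ => abs_nonneg _) (Finset.mem_univ i)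
      omega
    constructor
    · intro i; intro j; exact (abs_le_of_sq_le (hb i j)).1
    · intro i; intro j; exact (abs_le_of_sq_le (hb i j)).2
  have hinj : Set.InjOn Φ S := by
    rintro f₁ hf₁ f₂ hf₂ hEq
    have hval : ∀ i, f₁ (e i) = f₂ (e i) := by
      intro i
      set k₁ := piL N w w' (f₁ (e i)) with hk₁
      set k₂ := piL N w w' (f₂ (e i)) with hk₂
      have hVi : (w 0) • k₁ - (k₁ 0) • w = (w 0) • k₂ - (k₂ 0) • w := congrFun hEq i
      have hk'₁ : QZ N w' k₁ = 0 := QZ_w'_piL hww' _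
      have hk'₂ : QZ N w' k₂ = 0 := QZ_w'_piL hww' _
      have h0 : k₁ 0 = k₂ 0 := by
        have := congrArg (QZ N w') hVi
        rw [QZ_sub_right, QZ_sub_right, QZ_smul_right, QZ_smul_right,
          QZ_smul_right, QZ_smul_right, hk'₁, hk'₂, QZ_comm w' w, hww'] at this
        omega
      have hkk : k₁ = k₂ := by
        funext j
        have hj := congrFun hVi j
        simp only [Pi.sub_apply, Pi.smul_apply, smul_eq_mul] at hj
        rw [h0] at hj
        have : w 0 * k₁ j = w 0 * k₂ j := by linarith
        exact mul_left_cancel₀ hw0 this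
      have hd₁ := decomp (w := w) (w' := w') (f₁ (e i))
      have hd₂ := decomp (w := w) (w' := w') (f₂ (e i))
      rw [← hk₁] at hd₁
      rw [← hk₂] at hd₂
      rw [hd₁, hd₂, hkk, aC, aC, (hcoeff f₁ hf₁ (e i)).1, (hcoeff f₁ hf₁ (e i)).2,
        (hcoeff f₂ hf₂ (e i)).1, (hcoeff f₂ hf₂ (e i)).2]
    -- conclude f₁ = f₂
    apply LinearEquiv.toLinearMap_injective
    apply LinearMap.pi_ext
    intro i c
    have : (Pi.single i c : Fin (N+1) → ℤ) = c • (e i) := by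
      rw [he]
      funext j
      by_cases h : j = i <;> simp [Pi.single_apply, h]
    rw [this]
    simp only [LinearEquiv.coe_coe, map_smul, hval i]
  exact Set.Finite.of_finite_image (Set.Finite.subset (Set.finite_Icc _ _) himg) hinj

end Stmt11

namespace Stmt11

variable {N : ℕ} {w w' : Fin (N+1) → ℤ} {gl : (Fin (N+1) → ℤ) →ₗ[ℤ] (Fin (N+1) → ℤ)}

lemma sig_sub (hglw : gl w = w) {e : Fin (N+1) → ℤ} (he : QZ N w e = 0) :
    sigL N w w' gl e - e
      = gl e - e - QZ N w' (gl (piL N w w' e)) • w := by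
  have hπ : gl (piL N w w' e) = gl e - aC N w w' e • w := by
    rw [piL_apply, he, map_sub, map_sub, map_smul, map_smul, hglw]
    module
  rw [sigL_apply, tauL_apply, he, hπ]
  module

end Stmt11

/-- `Λ_w` is a maximal torsion-free subgroup of `Stab(w)`: for any
`g ∈ Stab(w)` with `g ∉ Λ_w`, the subgroup generated by `Λ_w` and `g` contains a
nontrivial torsion element. -/
theorem stmt_11 (N : ℕ) (hN : 2 ≤ N)
    (w : Fin (N + 1) → ℤ) (hwiso : QZ N w w = 0)
    (hprim : ∀ (a : ℤ) (x : Fin (N + 1) → ℤ), a • x = w → IsUnit a)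
    (g : (Fin (N + 1) → ℤ) ≃ₗ[ℤ] (Fin (N + 1) → ℤ))
    (hgQ : ∀ x y, QZ N (g x) (g y) = QZ N x y) (hgw : g w = w)
    (hgnot : ¬ ∀ e, QZ N w e = 0 → ∃ c : ℤ, g e - e = c • w) :
    ∃ h ∈ Subgroup.closure
      ({f : (Fin (N + 1) → ℤ) ≃ₗ[ℤ] (Fin (N + 1) → ℤ) |
        (∀ x y, QZ N (f x) (f y) = QZ N x y) ∧ f w = w ∧
        (∀ e, QZ N w e = 0 → ∃ c : ℤ, f e - e = c • w)} ∪ {g}),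
      h ≠ 1 ∧ ∃ n : ℕ, 0 < n ∧ h ^ n = 1 := by
  classical
  open Stmt11 in
  -- `w ≠ 0`
  have hwne : w ≠ 0 := by
    intro h
    have := hprim 0 0 (by simp [h])
    simpa using this
  -- `w 0 ≠ 0`
  have hw0 : w 0 ≠ 0 := by
    intro h0
    apply hwne
    have hsum : ∑ i : Fin N, w i.succ * w i.succ = 0 := by
      have h := hwiso
      rw [QZ, h0] at h
      simpa using h.symm
    have hz : ∀ i : Fin N, w i.succ = 0 := by
      intro i
      have := (Finset.sum_eq_zero_iff_of_nonneg
        (fun j _ => mul_self_nonneg (w j.succ))).mp hsum i (Finset.mem_univ i)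
      exact mul_self_eq_zero.mp this
    funext j
    rcases Fin.eq_zero_or_eq_succ j with rfl | ⟨i, rfl⟩
    · exact h0
    · exact hz i
  -- there is `w'` with `QZ N w w' = 1`, by primitivity and Bezout
  obtain ⟨c, hc⟩ : ∃ c : Fin (N+1) → ℤ, ∑ i, c i • w i = 1 := by
    have h1I : (1:ℤ) ∈ Submodule.span ℤ (Set.range w) := by
      obtain ⟨d, hdI⟩ := (IsPrincipalIdealRing.principal (Ideal.span (Set.range w))).principal
      have hdvd : ∀ j, d ∣ w j := by
        intro j
        have hmem : w j ∈ Ideal.span (Set.range w) := Ideal.subset_span ⟨j, rfl⟩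
        rw [hdI] at hmem
        obtain ⟨a, ha⟩ := Submodule.mem_span_singleton.mp hmem
        exact ⟨a, by rw [← ha, smul_eq_mul, mul_comm]⟩
      have hdu : IsUnit d := by
        refine hprim d (fun j => w j / d) (funext fun j => ?_)
        simpa [smul_eq_mul] using Int.mul_ediv_cancel' (hdvd j)
      have : Ideal.span (Set.range w) = ⊤ := by
        rw [hdI]
        exact Ideal.span_singleton_eq_top.mpr hdu
      show (1:ℤ) ∈ Ideal.span (Set.range w)
      rw [this]; trivial
    exact (Submodule.mem_span_range_iff_exists_fun ℤ).mp h1I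
  set w' : Fin (N+1) → ℤ := fun j => if j = 0 then c 0 else -(c j) with hw'def
  have hww' : QZ N w w' = 1 := by
    have hsucc : ∑ i : Fin N, w i.succ * w' i.succ = -∑ i : Fin N, c i.succ • w i.succ := by
      rw [← Finset.sum_neg_distrib]
      refine Finset.sum_congr rfl fun i _ => ?_
      rw [hw'def]
      simp only [smul_eq_mul, if_neg (Fin.succ_ne_zero i)]
      ring
    rw [QZ, hsucc, ← hc, Fin.sum_univ_succ]
    simp only [hw'def, if_pos rfl, smul_eq_mul]
    ring
  -- derived facts for `g.symm`
  have hg'w : g.symm w = w := by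
    have h := congrArg g.symm hgw
    rw [g.symm_apply_apply] at h
    exact h.symm
  have hg'Q : ∀ x y, QZ N (g.symm x) (g.symm y) = QZ N x y := by
    intro x y
    have := hgQ (g.symm x) (g.symm y)
    rw [g.apply_symm_apply, g.apply_symm_apply] at this
    exact this.symm
  -- the isometry `σ`
  have hgQ' : ∀ x y, QZ N (g.toLinearMap x) (g.toLinearMap y) = QZ N x y := hgQ
  have hgw' : g.toLinearMap w = w := hgw
  have hg'Q' : ∀ x y, QZ N (g.symm.toLinearMap x) (g.symm.toLinearMap y) = QZ N x y := hg'Q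
  have hg'w' : g.symm.toLinearMap w = w := hg'w
  have hc₁ : (sigL N w w' g.toLinearMap).comp (sigL N w w' g.symm.toLinearMap)
      = LinearMap.id := by
    apply LinearMap.ext; intro x
    simpa using sig_comp hwiso hww' hg'Q' hg'w' hgw' (fun k => g.apply_symm_apply k) x
  have hc₂ : (sigL N w w' g.symm.toLinearMap).comp (sigL N w w' g.toLinearMap)
      = LinearMap.id := by
    apply LinearMap.ext; intro x
    simpa using sig_comp hwiso hww' hgQ' hgw' hg'w' (fun k => g.symm_apply_apply k) x
  set σ : (Fin (N+1) → ℤ) ≃ₗ[ℤ] (Fin (N+1) → ℤ) :=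
    LinearEquiv.ofLinear (sigL N w w' g.toLinearMap) (sigL N w w' g.symm.toLinearMap) hc₁ hc₂
    with hσdef
  have hσ_apply : ∀ x, σ x = sigL N w w' g.toLinearMap x := fun x => rfl
  have hσQ : ∀ x y, QZ N (σ x) (σ y) = QZ N x y := by
    intro x y
    rw [hσ_apply, hσ_apply]
    exact sig_isometry hwiso hww' hgQ' hgw' x y
  have hσw : σ w = w := by rw [hσ_apply]; exact sig_w hwiso hww' hgw'
  have hσw' : σ w' = w' := by rw [hσ_apply]; exact sig_w' hww'
  -- σ is nontrivial
  have hσne : σ ≠ 1 := by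
    intro h1
    push_neg at hgnot
    obtain ⟨e, he, hne⟩ := hgnot
    apply hne (QZ N w' (g.toLinearMap (piL N w w' e)))
    have hσe : σ e = e := by rw [h1]; rfl
    have hs := sig_sub (w' := w') hgw' he
    rw [← hσ_apply, hσe, sub_self] at hs
    exact sub_eq_zero.mp hs.symm
  -- σ is in the closure
  have hlam : σ * g⁻¹ ∈
      ({f : (Fin (N + 1) → ℤ) ≃ₗ[ℤ] (Fin (N + 1) → ℤ) |
        (∀ x y, QZ N (f x) (f y) = QZ N x y) ∧ f w = w ∧
        (∀ e, QZ N w e = 0 → ∃ c : ℤ, f e - e = c • w)}) := by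
    refine ⟨?_, ?_, ?_⟩
    · intro x y
      show QZ N (σ (g.symm x)) (σ (g.symm y)) = QZ N x y
      rw [hσQ, hg'Q]
    · show σ (g.symm w) = w
      rw [hg'w, hσw]
    · intro e he
      have hf : QZ N w (g.symm e) = 0 := by
        have := hg'Q w e
        rw [hg'w] at this
        rw [this, he]
      refine ⟨-(QZ N w' (g.toLinearMap (piL N w w' (g.symm e)))), ?_⟩
      show σ (g.symm e) - e = _
      have hs := sig_sub (w' := w') hgw' hf
      rw [← hσ_apply] at hs
      have hge : g.toLinearMap (g.symm e) = e := g.apply_symm_apply e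
      rw [hge] at hs
      have hre : σ (g.symm e) - e = (σ (g.symm e) - g.symm e) - (e - g.symm e) := by abel
      rw [hre, hs]
      module
  have hσmem : σ ∈ Subgroup.closure
      ({f : (Fin (N + 1) → ℤ) ≃ₗ[ℤ] (Fin (N + 1) → ℤ) |
        (∀ x y, QZ N (f x) (f y) = QZ N x y) ∧ f w = w ∧
        (∀ e, QZ N w e = 0 → ∃ c : ℤ, f e - e = c • w)} ∪ {g}) := by
    have hστ : σ = (σ * g⁻¹) * g := by group
    rw [hστ]
    exact Subgroup.mul_mem _
      (Subgroup.subset_closure (Or.inl hlam))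
      (Subgroup.subset_closure (Or.inr rfl))
  -- torsion from finiteness
  have hSfin := S_finite w w' hwiso hww' hw0
  have hpowS : ∀ n : ℕ, σ ^ n ∈
      {f : (Fin (N+1) → ℤ) ≃ₗ[ℤ] (Fin (N+1) → ℤ) |
        (∀ x y, QZ N (f x) (f y) = QZ N x y) ∧ f w = w ∧ f w' = w'} := by
    intro n
    induction n with
    | zero =>
      rw [pow_zero]
      exact ⟨fun x y => rfl, rfl, rfl⟩
    | succ n ih =>
      obtain ⟨hQ, hw1, hw1'⟩ := ih
      rw [pow_succ]
      refine ⟨?_, ?_, ?_⟩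
      · intro x y
        show QZ N ((σ ^ n) (σ x)) ((σ ^ n) (σ y)) = QZ N x y
        rw [hQ, hσQ]
      · show (σ ^ n) (σ w) = w
        rw [hσw, hw1]
      · show (σ ^ n) (σ w') = w'
        rw [hσw', hw1']
  haveI := hSfin.to_subtype
  obtain ⟨m, n, hmn, hEq⟩ := Finite.exists_ne_map_eq_of_infinite
    (fun k : ℕ => (⟨σ ^ k, hpowS k⟩ : {f : (Fin (N+1) → ℤ) ≃ₗ[ℤ] (Fin (N+1) → ℤ) |
        (∀ x y, QZ N (f x) (f y) = QZ N x y) ∧ f w = w ∧ f w' = w'}))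
  have hEq' : σ ^ m = σ ^ n := congrArg Subtype.val hEq
  obtain ⟨a, b, hab, hE⟩ : ∃ a b : ℕ, a < b ∧ σ ^ a = σ ^ b := by
    rcases lt_or_gt_of_ne hmn with h | h
    · exact ⟨m, n, h, hEq'⟩
    · exact ⟨n, m, h, hEq'.symm⟩
  have hσpow : σ ^ (b - a) = 1 := by
    have h1 : σ ^ (b - a) * σ ^ a = σ ^ b := by
      rw [← pow_add, Nat.sub_add_cancel hab.le]
    have h2 : σ ^ (b - a) * σ ^ a = 1 * σ ^ a := by
      rw [h1, one_mul, hE]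
    exact mul_right_cancel h2
  exact ⟨σ, hσmem, hσne, b - a, by omega, hσpow⟩
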